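/- Let R be a ring. Then the following are equivalent: (1) R is uniquely clean, i.e., every element of R can be written in exactly one way as the sum of an idempotent and a unit; (2) R is an SDI ring in which every idempotent is central. -/
import Mathlib


/-- `Δ(R) = {x ∈ R : x + u ∈ U(R) for every u ∈ U(R)}`. -/
def Delta (R : Type*) [Ring R] : Set R :=
  {x : R | ∀ u : R, IsUnit u → IsUnit (x + u)}

/-- A ring `R` is a strongly Δ tripotent (SDT) ring if every `a ∈ R` can be written
`a = e + d` with `e³ = e`, `d ∈ Δ(R)` and `ed = de`. -/
def IsSDTRing (R : Type*) [Ring R] : Prop :=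
  ∀ a : R, ∃ e d : R, e ^ 3 = e ∧ d ∈ Delta R ∧ e * d = d * e ∧ a = e + d

/-- A ring `R` is an SDI ring if every `a ∈ R` can be written `a = e + d`
with `e² = e`, `d ∈ Δ(R)` and `ed = de`. -/
def IsSDIRing (R : Type*) [Ring R] : Prop :=
  ∀ a : R, ∃ e d : R, e * e = e ∧ d ∈ Delta R ∧ e * d = d * e ∧ a = e + d

section Aux

variable {R : Type*} [Ring R]

lemma sq1_isUnit {s : R} (h : s * s = 1) : IsUnit s := ⟨⟨s, s, h, h⟩, rfl⟩

lemma idem_unit_eq_one {e : R} (he : e * e = e) (hu : IsUnit e) : e = 1 := by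
  obtain ⟨E, hE⟩ := hu
  have h2 : E * E = E := Units.ext (by rw [Units.val_mul, hE]; exact he)
  have h3 : E = 1 := mul_left_cancel (a := E) (by rw [h2, mul_one])
  rw [← hE, h3, Units.val_one]

lemma idem2_unit {e : R} (he : e * e = e) : (e + e - 1) * (e + e - 1) = 1 := by
  simp only [sub_mul, mul_sub, add_mul, mul_add, one_mul, mul_one, he]
  abel

lemma delta_neg {x : R} (hx : x ∈ Delta R) : -x ∈ Delta R := by
  intro u hu
  have h := (hx (-u) hu.neg).neg
  rwa [neg_add, neg_neg] at h

lemma delta_add {x y : R} (hx : x ∈ Delta R) (hy : y ∈ Delta R) : x + y ∈ Delta R := by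
  intro u hu
  have h := hx (y + u) (hy u hu)
  rwa [← add_assoc] at h

lemma delta_mul_isUnit {x y : R} (hx : x ∈ Delta R) (hy : IsUnit y) : x * y ∈ Delta R := by
  intro u hu
  obtain ⟨Y, rfl⟩ := hy
  have h1 : IsUnit (x + u * ↑Y⁻¹) := hx _ (hu.mul Y⁻¹.isUnit)
  have h2 : (x + u * ↑Y⁻¹) * ↑Y = x * ↑Y + u := by
    rw [add_mul, mul_assoc, Units.inv_mul, mul_one]
  rw [← h2]
  exact h1.mul Y.isUnit

lemma delta_mul {x y : R} (hx : x ∈ Delta R) (hy : y ∈ Delta R) : x * y ∈ Delta R := by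
  have h1 : x * (y + 1) ∈ Delta R := delta_mul_isUnit hx (hy 1 isUnit_one)
  have h2 : x * y = x * (y + 1) + -x := by rw [mul_add, mul_one]; abel
  rw [h2]
  exact delta_add h1 (delta_neg hx)

lemma uc_central (h : ∀ a : R, ∃! e : R, e * e = e ∧ IsUnit (a - e))
    {e : R} (he : e * e = e) (r : R) : e * r = r * e := by
  have h1e : (1 - e) * e = 0 := by rw [sub_mul, one_mul, he, sub_self]
  have he1 : e * (1 - e) = 0 := by rw [mul_sub, mul_one, he, sub_self]
  -- step 1 : e*r*(1-e) = 0
  have her : e * r = e * r * e := by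
    set x := e * r * (1 - e) with hxdef
    have hxe : x * e = 0 := by rw [hxdef, mul_assoc, h1e, mul_zero]
    have hex : e * x = x := by rw [hxdef, ← mul_assoc, ← mul_assoc, he]
    have hxx : x * x = 0 := by
      rw [hxdef, mul_assoc (e*r) (1-e)]
      rw [← mul_assoc (1-e) (e*r) (1-e), ← mul_assoc (1-e) e r, h1e, zero_mul, zero_mul, mul_zero]
    have hf : (e + x) * (e + x) = e + x := by
      simp only [add_mul, mul_add, he, hex, hxe, hxx, add_zero, zero_add]
    have hs : (x + (e + e - 1)) * (x + (e + e - 1)) = 1 := by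
      simp only [add_mul, mul_add, sub_mul, mul_sub, one_mul, mul_one, he, hex, hxe, hxx]
      abel
    obtain ⟨c, _, hcu⟩ := h ((e + x) + (e + e - 1))
    have h1 : e + x = c := hcu (e + x) ⟨hf, by rw [add_sub_cancel_left]; exact sq1_isUnit (idem2_unit he)⟩
    have h2 : e = c := hcu e ⟨he, by
      have : (e + x) + (e + e - 1) - e = x + (e + e - 1) := by abel
      rw [this]; exact sq1_isUnit hs⟩
    have hx0 : x = 0 := by
      have : e + x = e := h1.trans h2.symm
      rwa [add_eq_left] at this
    have := hx0
    rw [hxdef, mul_sub, mul_one] at this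
    exact (sub_eq_zero.mp this)
  -- step 2 : (1-e)*r*e = 0
  have hre : r * e = e * r * e := by
    set y := (1 - e) * r * e with hydef
    have hey : e * y = 0 := by rw [hydef, ← mul_assoc, ← mul_assoc, he1, zero_mul, zero_mul]
    have hye : y * e = y := by rw [hydef, mul_assoc, he]
    have hyy : y * y = 0 := by
      rw [hydef, mul_assoc ((1-e)*r) e (((1-e)*r)*e)]
      rw [← mul_assoc e ((1-e)*r) e, ← mul_assoc e (1-e) r, he1, zero_mul, zero_mul, mul_zero]
    have hg : (e + y) * (e + y) = e + y := by
      simp only [add_mul, mul_add, he, hey, hye, hyy, add_zero, zero_add]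
    have hs : (y + (e + e - 1)) * (y + (e + e - 1)) = 1 := by
      simp only [add_mul, mul_add, sub_mul, mul_sub, one_mul, mul_one, he, hey, hye, hyy]
      abel
    obtain ⟨c, _, hcu⟩ := h ((e + y) + (e + e - 1))
    have h1 : e + y = c := hcu (e + y) ⟨hg, by rw [add_sub_cancel_left]; exact sq1_isUnit (idem2_unit he)⟩
    have h2 : e = c := hcu e ⟨he, by
      have : (e + y) + (e + e - 1) - e = y + (e + e - 1) := by abel
      rw [this]; exact sq1_isUnit hs⟩
    have hy0 : y = 0 := by
      have : e + y = e := h1.trans h2.symm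
      rwa [add_eq_left] at this
    have := hy0
    rw [hydef, sub_mul, one_mul, sub_mul] at this
    exact sub_eq_zero.mp this
  rw [her, hre]

lemma uc_unit_sum (h : ∀ a : R, ∃! e : R, e * e = e ∧ IsUnit (a - e))
    {u v : R} (hu : IsUnit u) (hv : IsUnit v) : IsUnit (u + v - 1) := by
  obtain ⟨e, ⟨hc, hcw⟩, _⟩ := h (u + v)
  have hcomm : ∀ z : R, e * z = z * e := uc_central h hc
  set f := 1 - e with hfdef
  have hff : f * f = f := by
    rw [hfdef, sub_mul, one_mul, mul_sub, mul_one, hc, sub_self, sub_zero]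
  have hfe : f * e = 0 := by rw [hfdef, sub_mul, one_mul, hc, sub_self]
  have hef : e * f = 0 := by rw [hfdef, mul_sub, mul_one, hc, sub_self]
  have hfcomm : ∀ z : R, f * z = z * f := fun z => by
    rw [hfdef, sub_mul, one_mul, mul_sub, mul_one, hcomm]
  have hcol : ∀ a b : R, (f * a) * (f * b) = f * (a * b) := fun a b => by
    rw [← mul_assoc, mul_assoc f a f, ← hfcomm a, ← mul_assoc, hff, mul_assoc]
  have hze : ∀ z : R, (f * z) * e = 0 := fun z => by
    rw [mul_assoc, ← hcomm z, ← mul_assoc, hfe, zero_mul]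
  have hez : ∀ z : R, e * (f * z) = 0 := fun z => by rw [← mul_assoc, hef, zero_mul]
  obtain ⟨U, hU⟩ := hu
  obtain ⟨V, hV⟩ := hv
  obtain ⟨W, hW⟩ := hcw
  set x := f * (↑W⁻¹ * ↑U) + e with hxdef
  have hAB : (↑W⁻¹ * ↑U : R) * (↑U⁻¹ * ↑W) = 1 := by
    rw [mul_assoc, ← mul_assoc (↑U : R) (↑U⁻¹) (↑W), Units.mul_inv, one_mul, Units.inv_mul]
  have hx_unit : IsUnit x := by
    refine ⟨⟨x, f * (↑U⁻¹ * ↑W) + e, ?_, ?_⟩, rfl⟩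
    · rw [hxdef, add_mul, mul_add, mul_add, hcol, hze, hez, hc, hAB, mul_one,
        add_zero, zero_add, hfdef, sub_add_cancel]
    · have hBA : (↑U⁻¹ * ↑W : R) * (↑W⁻¹ * ↑U) = 1 := by
        rw [mul_assoc, ← mul_assoc (↑W : R) (↑W⁻¹) (↑U), Units.mul_inv, one_mul, Units.inv_mul]
      rw [hxdef, add_mul, mul_add, mul_add, hcol, hze, hez, hc, hBA, mul_one,
        add_zero, zero_add, hfdef, sub_add_cancel]
  have hkey : f * (↑W⁻¹ * ↑U) + f * (↑W⁻¹ * ↑V) = f := by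
    have huv : (↑W : R) + e = u + v := by rw [hW]; abel
    rw [← mul_add, ← mul_add, hU, hV, ← huv, mul_add, Units.inv_mul, mul_add, mul_one,
      ← hcomm (↑W⁻¹), ← mul_assoc, hfe, zero_mul, add_zero]
  have hxf : x - f = e - f * (↑W⁻¹ * ↑V) := by
    have h6 : f * (↑W⁻¹ * ↑U) = f - f * (↑W⁻¹ * ↑V) := eq_sub_of_add_eq hkey
    rw [hxdef, h6]; abel
  have hxf_unit : IsUnit (x - f) := by
    rw [hxf]
    refine ⟨⟨e - f * (↑W⁻¹ * ↑V), e - f * (↑V⁻¹ * ↑W), ?_, ?_⟩, rfl⟩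
    · have hAB2 : (↑W⁻¹ * ↑V : R) * (↑V⁻¹ * ↑W) = 1 := by
        rw [mul_assoc, ← mul_assoc (↑V : R) (↑V⁻¹) (↑W), Units.mul_inv, one_mul, Units.inv_mul]
      rw [sub_mul, mul_sub, mul_sub, hc, hez, hze, hcol, hAB2, mul_one, sub_zero, zero_sub,
        sub_neg_eq_add, hfdef]
      abel
    · have hBA2 : (↑V⁻¹ * ↑W : R) * (↑W⁻¹ * ↑V) = 1 := by
        rw [mul_assoc, ← mul_assoc (↑W : R) (↑W⁻¹) (↑V), Units.mul_inv, one_mul, Units.inv_mul]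
      rw [sub_mul, mul_sub, mul_sub, hc, hez, hze, hcol, hBA2, mul_one, sub_zero, zero_sub,
        sub_neg_eq_add, hfdef]
      abel
  obtain ⟨c', _, hcu'⟩ := h x
  have h1 : (0 : R) = c' := hcu' 0 ⟨by rw [mul_zero], by rw [sub_zero]; exact hx_unit⟩
  have h2 : f = c' := hcu' f ⟨hff, hxf_unit⟩
  have he1 : e = 1 := by
    have h4 : (1 : R) - e = 0 := by rw [← hfdef]; exact h2.trans h1.symm
    exact (sub_eq_zero.mp h4).symm
  rw [he1] at hW
  exact hW ▸ W.isUnit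

lemma sdi_unit_sub_one (hSDI : IsSDIRing R) {u : R} (hu : IsUnit u) : u - 1 ∈ Delta R := by
  obtain ⟨e, d, he, hd, _, hadd⟩ := hSDI u
  have h1 : e = -d + u := by rw [hadd]; abel
  have h2 : IsUnit e := h1 ▸ (delta_neg hd u hu)
  have h3 : e = 1 := idem_unit_eq_one he h2
  have h4 : u - 1 = d := by rw [hadd, h3]; abel
  exact h4 ▸ hd

lemma sdi_uniq (hSDI : IsSDIRing R) (hcent : ∀ e : R, e * e = e → ∀ r : R, e * r = r * e)
    {a f g : R} (hf : f * f = f) (hg : g * g = g)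
    (huf : IsUnit (a - f)) (hug : IsUnit (a - g)) : f = g := by
  have hfg : f * g = g * f := hcent f hf g
  have hΔu := sdi_unit_sub_one hSDI huf
  have hΔv := sdi_unit_sub_one hSDI hug
  have hxΔ : f - g ∈ Delta R := by
    have h1 := delta_add hΔv (delta_neg hΔu)
    have h2 : (a - g - 1) + -(a - f - 1) = f - g := by abel
    exact h2 ▸ h1
  set x := f - g with hxdef
  have hkf : (f * g) * f = f * g := by rw [mul_assoc, ← hfg, ← mul_assoc, hf]
  have hkg : (f * g) * g = f * g := by rw [mul_assoc, hg]
  have hfk : f * (f * g) = f * g := by rw [← mul_assoc, hf]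
  have hs : x * x = f + g - (f * g + f * g) := by
    rw [hxdef, sub_mul, mul_sub, mul_sub, hf, hg, hfg]; abel
  have hx3 : (x * x) * x = x := by
    rw [hs, hxdef]
    simp only [sub_mul, add_mul, mul_sub, hf, hg, hkf, hkg, ← hfg]
    abel
  have hidem : (x * x) * (x * x) = x * x := by rw [← mul_assoc, hx3]
  have h7 : IsUnit (x * x + -1) := (delta_mul hxΔ hxΔ) (-1) isUnit_one.neg
  obtain ⟨T, hT⟩ := h7
  have h8 : (x * x) * (x * x + -1) = 0 := by
    rw [mul_add, hidem, mul_neg_one, add_neg_cancel]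
  have hx20 : x * x = 0 := by
    have h9 : (x * x) * ↑T = 0 := by rw [hT]; exact h8
    calc x * x = ((x * x) * ↑T) * ↑T⁻¹ := by rw [mul_assoc, Units.mul_inv, mul_one]
    _ = 0 := by rw [h9, zero_mul]
  have hfk0 : f * (x * x) = f - f * g := by
    rw [hs, mul_sub, mul_add, mul_add, hf, hfk]; abel
  have hgk0 : (x * x) * g = g - f * g := by
    rw [hs, sub_mul, add_mul, add_mul, hg, hkg]; abel
  have h10 : f = f * g := by
    have h12 := hfk0; rw [hx20, mul_zero] at h12; exact (sub_eq_zero.mp h12.symm)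
  have h11 : g = f * g := by
    have h12 := hgk0; rw [hx20, zero_mul] at h12; exact (sub_eq_zero.mp h12.symm)
  exact h10.trans h11.symm

end Aux

theorem uniquely_clean_iff_isSDI_idem_central {R : Type*} [Ring R] :
    (∀ a : R, ∃! e : R, e * e = e ∧ IsUnit (a - e)) ↔
    (IsSDIRing R ∧ ∀ e : R, e * e = e → ∀ r : R, e * r = r * e) := by
  constructor
  · intro h
    refine ⟨?_, fun e he r => uc_central h he r⟩
    intro a
    obtain ⟨g, ⟨hg, hu⟩, _⟩ := h a
    have h1g : (1 - g) * (1 - g) = 1 - g := by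
      rw [sub_mul, one_mul, mul_sub, mul_one, hg, sub_self, sub_zero]
    refine ⟨1 - g, a - 1 + g, h1g, ?_, ?_, by abel⟩
    · intro v hv
      have ht := uc_unit_sum h hu hv
      have hs := sq1_isUnit (idem2_unit h1g)
      have h2 := (uc_unit_sum h hs ht.neg).neg
      have heq : (a - 1 + g) + v = -((((1-g)+(1-g)-1)) + -((a - g) + v - 1) - 1) := by abel
      rw [heq]; exact h2
    · have hgc := uc_central h hg (a - 1 + g)
      rw [sub_mul, one_mul, mul_sub, mul_one, hgc]
  · rintro ⟨hSDI, hcent⟩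
    intro a
    obtain ⟨e, d, he, hd, hcm, hadd⟩ := hSDI a
    have h1e : (1 - e) * (1 - e) = 1 - e := by
      rw [sub_mul, one_mul, mul_sub, mul_one, he, sub_self, sub_zero]
    have hunit : IsUnit (a - (1 - e)) := by
      have heq : a - (1 - e) = d + (e + e - 1) := by rw [hadd]; abel
      rw [heq]; exact hd _ (sq1_isUnit (idem2_unit he))
    refine ⟨1 - e, ⟨h1e, hunit⟩, ?_⟩
    rintro y ⟨hy, hyu⟩
    exact sdi_uniq hSDI hcent hy h1e hyu hunit
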